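/- A ring R is a CSNC ring if and only if the following two conditions hold: (1) the element 2 of R is nilpotent; and (2) for every clean element a of R there exists a natural number k ≥ 0 such that a^(2^k) - a^(2^(k+1)) is nilpotent. -/

import Mathlib

/-- An element `a` of a ring is *clean* if `a = e + u` for some idempotent `e` and unit `u`. -/
def IsCleanElem {R : Type*} [Ring R] (a : R) : Prop :=
  ∃ e u : R, IsIdempotentElem e ∧ IsUnit u ∧ a = e + u

/-- An element `a` of a ring is *strongly nil-clean* if `a = e + q` for some idempotent `e`
and nilpotent `q` with `e * q = q * e`. -/
def IsStronglyNilCleanElem {R : Type*} [Ring R] (a : R) : Prop :=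
  ∃ e q : R, IsIdempotentElem e ∧ IsNilpotent q ∧ e * q = q * e ∧ a = e + q

/-- A ring is a *CSNC ring* if every clean element is strongly nil-clean. -/
def IsCSNCRing (R : Type*) [Ring R] : Prop :=
  ∀ a : R, IsCleanElem a → IsStronglyNilCleanElem a

/-!
An element `a` is strongly nil-clean exactly when `a - a²` is nilpotent: one direction is the
identity `(e + q) - (e + q)² = q (1 - 2e - q)`, the other lifts the idempotent `a` of the
quotient by nilpotents to the idempotent `1 - (1 - aᵐ)ᵐ`, a polynomial in `a`.
Applied to the clean element `-1`, this makes `2` nilpotent in a CSNC ring. Conversely, once `2`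
is nilpotent, `(a - a²)^(2^k) ≡ a^(2^k) - a^(2^(k+1))` modulo `2` (the Frobenius congruence), so
the nilpotency of `a^(2^k) - a^(2^(k+1))` forces that of `a - a²`.
-/

open Polynomial

theorem two_dvd_sub_pow_two_pow_sub {S : Type*} [CommRing S] (x y : S) (k : ℕ) :
    2 ∣ (x - y) ^ 2 ^ k - (x ^ 2 ^ k - y ^ 2 ^ k) := by
  induction k with
  | zero => simp
  | succ k ih =>
    obtain ⟨c, hc⟩ := ih
    set d := (x - y) ^ 2 ^ k
    set u := x ^ 2 ^ k
    set v := y ^ 2 ^ k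
    refine ⟨v ^ 2 - u * v + 2 * c * (u - v) + 2 * c ^ 2, ?_⟩
    simp only [pow_succ, pow_mul]
    linear_combination (d + u - v + 2 * c) * hc

theorem mul_one_sub_dvd_sub_one_sub_one_sub_pow_pow {S : Type*} [CommRing S] (x : S) {m : ℕ}
    (hm : m ≠ 0) : x * (1 - x) ∣ x - (1 - (1 - x ^ m) ^ m) := by
  have hx : x ∣ 1 - (1 - x ^ m) ^ m := by
    have h := sub_dvd_pow_sub_pow 1 (1 - x ^ m) m
    rw [sub_sub_cancel, one_pow] at h
    exact (dvd_pow_self x hm).trans h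
  have hx' : 1 - x ∣ (1 - x ^ m) ^ m := by
    have h := sub_dvd_pow_sub_pow 1 x m
    rw [one_pow] at h
    exact h.trans (dvd_pow_self _ hm)
  refine (show IsCoprime x (1 - x) from ⟨1, 1, by ring⟩).mul_dvd (dvd_sub dvd_rfl hx) ?_
  rw [show x - (1 - (1 - x ^ m) ^ m) = (1 - x ^ m) ^ m - (1 - x) by ring]
  exact dvd_sub hx' dvd_rfl

section Ring

variable {R : Type*} [Ring R]

theorem commute_aeval (a : R) (p q : ℤ[X]) : Commute (aeval a p) (aeval a q) :=
  (Commute.all p q).map (aeval a)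

variable {a : R}

theorem isNilpotent_aeval_of_dvd {p q : ℤ[X]} (hpq : p ∣ q) (hp : IsNilpotent (aeval a p)) :
    IsNilpotent (aeval a q) := by
  obtain ⟨r, rfl⟩ := hpq
  rw [map_mul]
  exact (commute_aeval a p r).isNilpotent_mul_right hp

theorem isNilpotent_sub_sq_of_isNilpotent_pow_two_pow_sub (h2 : IsNilpotent (2 : R)) {k : ℕ}
    (h : IsNilpotent (a ^ 2 ^ k - a ^ 2 ^ (k + 1))) : IsNilpotent (a - a ^ 2) := by
  set t : ℤ[X] := X ^ 2 ^ k - X ^ 2 ^ (k + 1)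
  have ht : IsNilpotent (aeval a t) := by simpa [t] using h
  have hdiff : IsNilpotent (aeval a ((X - X ^ 2) ^ 2 ^ k - t)) := by
    refine isNilpotent_aeval_of_dvd (p := 2) ?_ (by rwa [map_ofNat])
    have h := two_dvd_sub_pow_two_pow_sub (X : ℤ[X]) (X ^ 2) k
    rwa [← pow_mul, ← pow_succ'] at h
  have hpow := (commute_aeval a _ t).isNilpotent_add hdiff ht
  rw [← map_add, sub_add_cancel] at hpow
  simp only [map_pow, map_sub, aeval_X] at hpow
  exact hpow.of_pow

theorem IsStronglyNilCleanElem.isNilpotent_sub_sq (h : IsStronglyNilCleanElem a) :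
    IsNilpotent (a - a ^ 2) := by
  obtain ⟨e, q, he, hq, heq, rfl⟩ := h
  have hqe : Commute q e := heq.symm
  have hfactor : e + q - (e + q) ^ 2 = q * (1 - 2 * e - q) := by
    rw [← sub_eq_zero]
    calc e + q - (e + q) ^ 2 - q * (1 - 2 * e - q) = (e - e * e) + (q * e - e * q) := by
          noncomm_ring
      _ = 0 := by rw [he.eq, heq, sub_self, sub_self, add_zero]
  rw [hfactor]
  exact (((Commute.one_right q).sub_right ((Commute.ofNat_right q 2).mul_right hqe)).sub_right
    (Commute.refl q)).isNilpotent_mul_right hq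

theorem isStronglyNilCleanElem_of_isNilpotent_sub_sq (h : IsNilpotent (a - a ^ 2)) :
    IsStronglyNilCleanElem a := by
  obtain ⟨n, hn⟩ := h
  set P : ℤ[X] := 1 - (1 - X ^ (n + 1)) ^ (n + 1)
  have hidem : IsIdempotentElem (aeval a P) := by
    have hn' : (a - a ^ 2) ^ (n + 1) = 0 := by rw [pow_succ, hn, zero_mul]
    simpa [P] using isIdempotentElem_one_sub_one_sub_pow_pow a (n + 1) hn'
  have hnil : IsNilpotent (aeval a (X - P)) := by
    refine isNilpotent_aeval_of_dvd (p := X - X ^ 2) ?_ (by simpa using ⟨n, hn⟩)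
    simpa [mul_sub, ← sq] using mul_one_sub_dvd_sub_one_sub_one_sub_pow_pow (X : ℤ[X])
      n.succ_ne_zero
  refine ⟨aeval a P, aeval a (X - P), hidem, hnil, commute_aeval a P (X - P), ?_⟩
  simp

theorem isStronglyNilCleanElem_iff_isNilpotent_sub_sq :
    IsStronglyNilCleanElem a ↔ IsNilpotent (a - a ^ 2) :=
  ⟨IsStronglyNilCleanElem.isNilpotent_sub_sq, isStronglyNilCleanElem_of_isNilpotent_sub_sq⟩

theorem isCleanElem_neg_one : IsCleanElem (-1 : R) :=
  ⟨0, -1, .zero, isUnit_one.neg, (zero_add _).symm⟩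

end Ring

theorem stmt_14 (R : Type*) [Ring R] :
    IsCSNCRing R ↔
      IsNilpotent (2 : R) ∧
        ∀ a : R, IsCleanElem a → ∃ k : ℕ, IsNilpotent (a ^ 2 ^ k - a ^ 2 ^ (k + 1)) := by
  simp only [IsCSNCRing, isStronglyNilCleanElem_iff_isNilpotent_sub_sq]
  constructor
  · intro h
    refine ⟨?_, fun a ha => ⟨0, by simpa using h a ha⟩⟩
    have h2 := h (-1) isCleanElem_neg_one
    rw [neg_one_sq, ← neg_add', one_add_one_eq_two, isNilpotent_neg_iff] at h2
    exact h2
  · rintro ⟨h2, hclean⟩ a ha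
    obtain ⟨k, hk⟩ := hclean a ha
    exact isNilpotent_sub_sq_of_isNilpotent_pow_two_pow_sub h2 hk
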